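/- If W̃ is a Darboux transformation of W, then the algebra D(W) is commutative if and only if D(W̃) is commutative. -/

import Mathlib

open Polynomial Matrix MeasureTheory
open scoped ComplexOrder

/-- Matrix polynomials: square matrices with polynomial entries. -/
abbrev MatP (n : Type*) := Matrix n n (Polynomial ℂ)

section MatFramework
variable {n : Type*} [Fintype n] [DecidableEq n]

/-- Entrywise `j`-th derivative of a matrix polynomial. -/
noncomputable def derivIter (j : ℕ) (P : MatP n) : MatP n :=
  P.map (fun p => Polynomial.derivative^[j] p)

/-- Right action of the differential operator `∑_j ∂^j F j` on a matrix polynomial: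
`P · D = ∑_j P^{(j)} F_j`. -/
noncomputable def actOp (F : ℕ →₀ MatP n) (P : MatP n) : MatP n :=
  F.sum fun j Fj => derivIter j P * Fj

/-- A map on matrix polynomials is a matrix differential operator with polynomial
coefficients if it is given by some `∑_j ∂^j F_j`. -/
def IsDiffOp (L : MatP n → MatP n) : Prop :=
  ∃ F : ℕ →₀ MatP n, ∀ P, L P = actOp F P

/-- Degree of a matrix polynomial: the sup of the degrees of its entries. -/
noncomputable def matDeg (P : MatP n) : WithBot ℕ :=
  Finset.univ.sup fun ij : n × n => (P ij.1 ij.2).degree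

/-- A differential operator is degree-preserving if `deg (P · V) = deg P` for all `P`. -/
def DegPres (L : MatP n → MatP n) : Prop :=
  IsDiffOp L ∧ ∀ P, matDeg (L P) = matDeg P

/-- Natural-number degree of a matrix polynomial. -/
noncomputable def matNatDeg (P : MatP n) : ℕ :=
  Finset.univ.sup fun ij : n × n => (P ij.1 ij.2).natDegree

/-- Leading coefficient of a matrix polynomial. -/
noncomputable def matLead (P : MatP n) : Matrix n n ℂ :=
  Matrix.of fun i j => (P i j).coeff (matNatDeg P)

/-- Evaluation of a matrix polynomial at a real point. -/
noncomputable def evalMP (P : MatP n) (x : ℝ) : Matrix n n ℂ :=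
  Matrix.of fun i j => (P i j).eval (x : ℂ)

/-- The matrix-valued inner product `⟨P,Q⟩ = ∫_S P(x) W(x) Q(x)^* dx`. -/
noncomputable def wInner (S : Set ℝ) (W : ℝ → Matrix n n ℂ) (P Q : MatP n) :
    Matrix n n ℂ :=
  Matrix.of fun i j => ∫ x in S, (evalMP P x * W x * (evalMP Q x)ᴴ) i j

/-- `W` is a weight matrix supported on `S`: positive definite on `S` with finite moments. -/
def IsWeight (S : Set ℝ) (W : ℝ → Matrix n n ℂ) : Prop :=
  MeasurableSet S ∧ volume S ≠ 0 ∧ (∀ x ∈ S, (W x).PosDef) ∧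
  ∀ (k : ℕ) (i j : n), IntegrableOn (fun x => ‖W x i j‖ * |x| ^ k) S

/-- `P` is the sequence of monic orthogonal matrix polynomials for the weight `W` on `S`. -/
def MonicOPS (S : Set ℝ) (W : ℝ → Matrix n n ℂ) (P : ℕ → MatP n) : Prop :=
  (∀ k, matNatDeg (P k) = k) ∧
  (∀ k, (Matrix.of fun i j => ((P k) i j).coeff k) = (1 : Matrix n n ℂ)) ∧
  (∀ k l, k ≠ l → wInner S W (P k) (P l) = 0)

/-- Membership in the algebra `D(W)`: a differential operator having the (monic orthogonal)
polynomials `P_k` as eigenfunctions with matrix eigenvalues. -/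
def InDW (P : ℕ → MatP n) (L : MatP n → MatP n) : Prop :=
  IsDiffOp L ∧ ∀ k, ∃ Λ : Matrix n n ℂ, L (P k) = Λ.map Polynomial.C * P k

/-- `Pt` (the monic OPS of `W̃`) is obtained from `P` (the monic OPS of `W`) by a Darboux
transformation: some `D = V N ∈ D(W)` with `V, N` degree-preserving and
`P_k · V = A_k P̃_k`, `A_k` nonsingular. -/
def IsDarbouxPair (P Pt : ℕ → MatP n) : Prop :=
  ∃ V Nd : MatP n → MatP n, DegPres V ∧ DegPres Nd ∧
    InDW P (fun Q => Nd (V Q)) ∧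
    ∀ k, ∃ A : Matrix n n ℂ, IsUnit A ∧ V (P k) = A.map Polynomial.C * Pt k

end MatFramework

/-- The algebra `D(W)` (of operators having the monic OPS `P` as eigenfunctions)
is commutative. -/
def DWComm {n : Type*} [Fintype n] [DecidableEq n] (P : ℕ → MatP n) : Prop :=
  ∀ L₁ L₂ : MatP n → MatP n, InDW P L₁ → InDW P L₂ → ∀ Q, L₁ (L₂ Q) = L₂ (L₁ Q)

/-!
An operator of `D(W)` acts on the monic basis `P k` by left multiplication with its eigenvalue,
and every matrix polynomial is a combination `∑ c_k P_k` with constant left coefficients, so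
`D(W)` is commutative iff at each degree the eigenvalues of its operators commute.

The Darboux data intertwine the two bases: `P_k · V = A_k P̃_k` and `P̃_k · N = B_k P_k`, where
`B_k = A_k⁻¹ Θ_k` and `Θ_k` is the eigenvalue of `D = V N`, invertible because `V N` preserves
degrees and is therefore injective. For `L ∈ D(W̃)` with eigenvalue `Γ_k`, the operator `V L N`
lies in `D(W)` with eigenvalue `A_k Γ_k B_k`, and `D` has eigenvalue `A_k B_k`; commutation of
these in `D(W)` forces the `Γ_k` to commute. The situation is symmetric under exchanging
`(W, V)` with `(W̃, N)`.
-/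

section Deriv

variable {n : Type*}

theorem derivIter_zero (P : MatP n) : derivIter 0 P = P := by
  ext; simp [derivIter]

theorem derivIter_succ (j : ℕ) (P : MatP n) :
    derivIter (j + 1) P = derivIter 1 (derivIter j P) := by
  ext; simp [derivIter, Function.iterate_succ_apply']

theorem derivIter_zero_right (j : ℕ) : derivIter j (0 : MatP n) = 0 := by
  ext; simp [derivIter]

theorem derivIter_add (j : ℕ) (P Q : MatP n) :
    derivIter j (P + Q) = derivIter j P + derivIter j Q := by
  ext; simp [derivIter, iterate_map_add]

variable [Fintype n]

theorem derivIter_one_mul (P Q : MatP n) :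
    derivIter 1 (P * Q) = derivIter 1 P * Q + P * derivIter 1 Q := by
  ext; simp [derivIter, Matrix.mul_apply, Finset.sum_add_distrib]

theorem derivIter_mapC_mul (j : ℕ) (X : Matrix n n ℂ) (Q : MatP n) :
    derivIter j (X.map C * Q) = X.map C * derivIter j Q := by
  ext; simp [derivIter, Matrix.mul_apply, iterate_derivative_sum, iterate_derivative_C_mul]

theorem actOp_zero_left : actOp (0 : ℕ →₀ MatP n) = fun _ => 0 := by
  ext1; simp [actOp]

theorem actOp_add_left (F G : ℕ →₀ MatP n) :
    actOp (F + G) = fun Q => actOp F Q + actOp G Q :=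
  funext fun _ => Finsupp.sum_add_index' (fun _ => mul_zero _) (fun _ _ _ => mul_add _ _ _)

theorem actOp_single (j : ℕ) (B : MatP n) :
    actOp (Finsupp.single j B) = fun Q => derivIter j Q * B :=
  funext fun _ => Finsupp.sum_single_index (mul_zero _)

end Deriv

section DiffOp

variable {n : Type*} [Fintype n] {L M : MatP n → MatP n}

theorem isDiffOp_zero : IsDiffOp fun _ : MatP n => (0 : MatP n) :=
  ⟨0, by simp [actOp_zero_left]⟩

theorem isDiffOp_monomial (j : ℕ) (B : MatP n) : IsDiffOp fun Q => derivIter j Q * B :=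
  ⟨Finsupp.single j B, by simp [actOp_single]⟩

theorem IsDiffOp.add (hL : IsDiffOp L) (hM : IsDiffOp M) : IsDiffOp fun Q => L Q + M Q := by
  obtain ⟨F, hF⟩ := hL
  obtain ⟨G, hG⟩ := hM
  exact ⟨F + G, by simp [hF, hG, actOp_add_left]⟩

theorem IsDiffOp.induction_on {motive : (MatP n → MatP n) → Prop} (hL : IsDiffOp L)
    (zero : motive fun _ => 0) (add : ∀ L M, motive L → motive M → motive fun Q => L Q + M Q)
    (monomial : ∀ j B, motive fun Q => derivIter j Q * B) : motive L := by
  obtain ⟨F, hF⟩ := hL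
  obtain rfl : L = actOp F := funext hF
  clear hF
  induction F using Finsupp.induction_linear with
  | zero => rwa [actOp_zero_left]
  | add F G hF hG => rw [actOp_add_left]; exact add _ _ hF hG
  | single j B => rw [actOp_single]; exact monomial j B

theorem IsDiffOp.mul_right (hL : IsDiffOp L) (B : MatP n) : IsDiffOp fun Q => L Q * B :=
  hL.induction_on (motive := fun L => IsDiffOp fun Q => L Q * B)
    (by simpa using isDiffOp_zero)
    (fun _ _ hL hM => by simpa [add_mul] using hL.add hM)
    (fun j B' => by simpa [mul_assoc] using isDiffOp_monomial j (B' * B))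

theorem IsDiffOp.derivIter_one (hL : IsDiffOp L) : IsDiffOp fun Q => derivIter 1 (L Q) :=
  hL.induction_on (motive := fun L => IsDiffOp fun Q => derivIter 1 (L Q))
    (by simpa [derivIter_zero_right] using isDiffOp_zero)
    (fun _ _ hL hM => by simpa [derivIter_add] using hL.add hM)
    (fun j B => by
      simpa [derivIter_one_mul, ← derivIter_succ j] using
        (isDiffOp_monomial (j + 1) B).add (isDiffOp_monomial j (derivIter 1 B)))

theorem IsDiffOp.derivIter (hL : IsDiffOp L) (j : ℕ) : IsDiffOp fun Q => derivIter j (L Q) := by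
  induction j with
  | zero => simpa [derivIter_zero] using hL
  | succ j ih => simpa only [derivIter_succ j] using ih.derivIter_one

theorem IsDiffOp.comp (hL : IsDiffOp L) (hM : IsDiffOp M) : IsDiffOp fun Q => M (L Q) :=
  hM.induction_on (motive := fun M => IsDiffOp fun Q => M (L Q)) isDiffOp_zero
    (fun _ _ hL hM => hL.add hM) (fun j B => (hL.derivIter j).mul_right B)

theorem IsDiffOp.map_add (hL : IsDiffOp L) (P Q : MatP n) : L (P + Q) = L P + L Q :=
  hL.induction_on (motive := fun L => L (P + Q) = L P + L Q) (by simp)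
    (fun _ _ hL hM => by simp only [hL, hM, add_add_add_comm])
    (fun j B => by simp [derivIter_add, add_mul])

theorem IsDiffOp.map_sub (hL : IsDiffOp L) (P Q : MatP n) : L (P - Q) = L P - L Q :=
  _root_.map_sub (AddMonoidHom.mk' L hL.map_add) P Q

theorem IsDiffOp.map_sum (hL : IsDiffOp L) {ι : Type*} (s : Finset ι) (f : ι → MatP n) :
    L (∑ i ∈ s, f i) = ∑ i ∈ s, L (f i) :=
  _root_.map_sum (AddMonoidHom.mk' L hL.map_add) f s

theorem IsDiffOp.map_mapC_mul (hL : IsDiffOp L) (X : Matrix n n ℂ) (Q : MatP n) :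
    L (X.map C * Q) = X.map C * L Q :=
  hL.induction_on (motive := fun L => L (X.map C * Q) = X.map C * L Q) (by simp)
    (fun _ _ hL hM => by simp only [hL, hM, mul_add])
    (fun j B => by simp [derivIter_mapC_mul, mul_assoc])

theorem IsDiffOp.map_mapC_mul_of_eq (hL : IsDiffOp L) {Q R : MatP n} {Y : Matrix n n ℂ}
    (hQ : L Q = Y.map C * R) (X : Matrix n n ℂ) : L (X.map C * Q) = (X * Y).map C * R := by
  rw [hL.map_mapC_mul, hQ, ← mul_assoc, Matrix.map_mul]

theorem IsDiffOp.map_sum_mapC_mul (hL : IsDiffOp L) {P : ℕ → MatP n}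
    {Λ : ℕ → Matrix n n ℂ} (hΛ : ∀ k, L (P k) = (Λ k).map C * P k) (s : Finset ℕ)
    (c : ℕ → Matrix n n ℂ) :
    L (∑ k ∈ s, (c k).map C * P k) = ∑ k ∈ s, (c k * Λ k).map C * P k := by
  rw [hL.map_sum]
  exact Finset.sum_congr rfl fun k _ => hL.map_mapC_mul_of_eq (hΛ k) (c k)

theorem matDeg_eq_bot_iff {Q : MatP n} : matDeg Q = ⊥ ↔ Q = 0 := by
  simp [matDeg, Finset.sup_eq_bot_iff, ← Matrix.ext_iff]

theorem DegPres.comp (hL : DegPres L) (hM : DegPres M) :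
    DegPres fun Q => M (L Q) :=
  ⟨hL.1.comp hM.1, fun Q => (hM.2 _).trans (hL.2 Q)⟩

theorem DegPres.injective (hL : DegPres L) : Function.Injective L := by
  intro Q R h
  rw [← sub_eq_zero, ← matDeg_eq_bot_iff, ← hL.2, hL.1.map_sub, h, sub_self, matDeg_eq_bot_iff]

end DiffOp

theorem Polynomial.exists_eq_sum_C_mul_of_degree_lt {R : Type*} [Ring R] {p : ℕ → R[X]}
    (hdeg : ∀ k, (p k).natDegree ≤ k) (hcoeff : ∀ k, (p k).coeff k = 1) (m : ℕ) (q : R[X])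
    (hq : q.degree < m) : ∃ c : ℕ → R, q = ∑ k ∈ Finset.range m, C (c k) * p k := by
  induction m generalizing q with
  | zero => exact ⟨0, by simpa using hq⟩
  | succ m ih =>
    obtain ⟨c, hc⟩ := ih (q - C (q.coeff m) * p m) <| by
      rw [degree_lt_iff_coeff_zero]
      intro i hi
      rcases hi.eq_or_lt with rfl | hi
      · simp [hcoeff]
      · have hqi : q.coeff i = 0 := coeff_eq_zero_of_degree_lt (hq.trans_le (by exact_mod_cast hi))
        simp [hqi, coeff_eq_zero_of_natDegree_lt ((hdeg m).trans_lt hi)]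
    refine ⟨Function.update c m (q.coeff m), ?_⟩
    rw [Finset.sum_range_succ, Function.update_self, ← sub_eq_iff_eq_add, hc]
    exact Finset.sum_congr rfl fun k hk => by
      rw [Function.update_of_ne (Finset.mem_range.mp hk).ne]

section MonicSeq

variable {n : Type*} [Fintype n] [DecidableEq n]

def IsMonicSeq (P : ℕ → MatP n) : Prop :=
  (∀ k, matNatDeg (P k) ≤ k) ∧ ∀ k, (Matrix.of fun i j => (P k i j).coeff k) = 1

theorem MonicOPS.isMonicSeq {S : Set ℝ} {W : ℝ → Matrix n n ℂ} {P : ℕ → MatP n}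
    (hP : MonicOPS S W P) : IsMonicSeq P :=
  ⟨fun k => (hP.1 k).le, hP.2.1⟩

namespace IsMonicSeq

variable {P : ℕ → MatP n} (hP : IsMonicSeq P)
include hP

theorem coeff_matPolyEquiv (k : ℕ) : (matPolyEquiv (P k)).coeff k = 1 := by
  ext i j
  rw [matPolyEquiv_coeff_apply, ← hP.2 k, Matrix.of_apply]

theorem natDegree_matPolyEquiv_le (k : ℕ) : (matPolyEquiv (P k)).natDegree ≤ k := by
  refine natDegree_le_iff_coeff_eq_zero.2 fun N hN => ?_
  ext i j
  rw [matPolyEquiv_coeff_apply, Matrix.zero_apply]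
  have hij : (P k i j).natDegree ≤ matNatDeg (P k) :=
    Finset.le_sup (f := fun ij : n × n => (P k ij.1 ij.2).natDegree) (Finset.mem_univ (i, j))
  exact coeff_eq_zero_of_natDegree_lt ((hij.trans (hP.1 k)).trans_lt hN)

theorem exists_eq_sum (Q : MatP n) :
    ∃ (m : ℕ) (c : ℕ → Matrix n n ℂ), Q = ∑ k ∈ Finset.range m, (c k).map C * P k := by
  obtain ⟨c, hc⟩ := exists_eq_sum_C_mul_of_degree_lt hP.natDegree_matPolyEquiv_le
    hP.coeff_matPolyEquiv ((matPolyEquiv Q).natDegree + 1) (matPolyEquiv Q)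
    (degree_le_natDegree.trans_lt (WithBot.coe_lt_coe.2 (Nat.lt_add_one _)))
  refine ⟨(matPolyEquiv Q).natDegree + 1, c, matPolyEquiv.injective ?_⟩
  conv_lhs => rw [hc]
  simp

theorem mapC_mul_right_cancel (k : ℕ) {X Y : Matrix n n ℂ}
    (h : X.map C * P k = Y.map C * P k) : X = Y := by
  simpa [coeff_C_mul, hP.coeff_matPolyEquiv] using
    congrArg (fun Q => (matPolyEquiv Q).coeff k) h

theorem isUnit_of_degPres {T : MatP n → MatP n} (hT : DegPres T) {k : ℕ} {Θ : Matrix n n ℂ}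
    (hΘ : T (P k) = Θ.map C * P k) : IsUnit Θ := by
  rw [IsArtinianRing.isUnit_iff_isRightRegular]
  intro X Y hXY
  apply hP.mapC_mul_right_cancel k
  apply hT.injective
  rw [hT.1.map_mapC_mul_of_eq hΘ, hT.1.map_mapC_mul_of_eq hΘ]
  exact congrArg (fun Z : Matrix n n ℂ => Z.map C * P k) hXY

end IsMonicSeq

theorem dwComm_iff_commute_eigenvalues {P : ℕ → MatP n} (hP : IsMonicSeq P) :
    DWComm P ↔ ∀ L₁ L₂, InDW P L₁ → InDW P L₂ → ∀ k (Λ₁ Λ₂ : Matrix n n ℂ),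
      L₁ (P k) = Λ₁.map C * P k → L₂ (P k) = Λ₂.map C * P k → Commute Λ₁ Λ₂ := by
  refine ⟨fun h L₁ L₂ h₁ h₂ k Λ₁ Λ₂ e₁ e₂ => ?_, fun h L₁ L₂ h₁ h₂ Q => ?_⟩
  · apply hP.mapC_mul_right_cancel k
    rw [← h₂.1.map_mapC_mul_of_eq e₂, ← e₁, ← h₁.1.map_mapC_mul_of_eq e₁, ← e₂]
    exact h L₂ L₁ h₂ h₁ (P k)
  · obtain ⟨m, c, rfl⟩ := hP.exists_eq_sum Q
    choose Λ₁ e₁ using h₁.2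
    choose Λ₂ e₂ using h₂.2
    rw [h₂.1.map_sum_mapC_mul e₂, h₁.1.map_sum_mapC_mul e₁, h₁.1.map_sum_mapC_mul e₁,
      h₂.1.map_sum_mapC_mul e₂]
    simp_rw [mul_assoc, (h L₁ L₂ h₁ h₂ _ _ _ (e₁ _) (e₂ _)).eq]

end MonicSeq

theorem Commute.of_units_sandwich {M : Type*} [Monoid M] (a b : Mˣ) {x y : M}
    (hx : Commute (↑a * x * ↑b) (↑a * ↑b)) (hy : Commute (↑a * y * ↑b) (↑a * ↑b))
    (hxy : Commute (↑a * x * ↑b) (↑a * y * ↑b)) : Commute x y := by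
  have unsandwich : ∀ {z w : M}, Commute (↑a * z * ↑b) (↑a * w * ↑b) →
      z * (↑b * ↑a) * w = w * (↑b * ↑a) * z := by
    intro z w h
    apply a.isUnit.mul_left_cancel
    apply b.isUnit.mul_right_cancel
    simpa only [mul_assoc] using h.eq
  have hxs : x * (↑b * ↑a) = ↑b * ↑a * x := by simpa using unsandwich (w := 1) (by simpa using hx)
  have hys : y * (↑b * ↑a) = ↑b * ↑a * y := by simpa using unsandwich (w := 1) (by simpa using hy)
  show x * y = y * x
  apply (b * a).isUnit.mul_left_cancel
  rw [Units.val_mul]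
  calc ↑b * ↑a * (x * y) = x * (↑b * ↑a) * y := by simp only [hxs, mul_assoc]
    _ = y * (↑b * ↑a) * x := unsandwich hxy
    _ = ↑b * ↑a * (y * x) := by simp only [hys, mul_assoc]

section Darboux

variable {n : Type*} [Fintype n] [DecidableEq n] {P Pt : ℕ → MatP n} {V N : MatP n → MatP n}
  {A B : ℕ → (Matrix n n ℂ)ˣ}

theorem IsDiffOp.eq_inv_mapC_mul (hN : IsDiffOp N) (u : (Matrix n n ℂ)ˣ) {R S : MatP n}
    {Y : Matrix n n ℂ} (h : N ((u : Matrix n n ℂ).map C * R) = Y.map C * S) :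
    N R = ((↑u⁻¹ : Matrix n n ℂ) * Y).map C * S := by
  rw [Matrix.map_mul, mul_assoc, ← h, hN.map_mapC_mul, ← mul_assoc, ← Matrix.map_mul,
    Units.inv_mul]
  simp

variable (hN : IsDiffOp N) (hVP : ∀ k, V (P k) = (A k : Matrix n n ℂ).map C * Pt k)
  (hNPt : ∀ k, N (Pt k) = (B k : Matrix n n ℂ).map C * P k)
include hN hVP hNPt

theorem sandwich_apply_eq_mapC_mul {L : MatP n → MatP n} (hL : IsDiffOp L) {k : ℕ}
    {Γ : Matrix n n ℂ} (hΓ : L (Pt k) = Γ.map C * Pt k) :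
    N (L (V (P k))) = ((A k : Matrix n n ℂ) * Γ * B k).map C * P k := by
  rw [hVP, hL.map_mapC_mul_of_eq hΓ, hN.map_mapC_mul_of_eq (hNPt k)]

variable (hV : IsDiffOp V)
include hV

theorem InDW.sandwich {L : MatP n → MatP n} (hL : InDW Pt L) :
    InDW P fun Q => N (L (V Q)) :=
  ⟨(hV.comp hL.1).comp hN, fun k =>
    let ⟨_, hΓ⟩ := hL.2 k
    ⟨_, sandwich_apply_eq_mapC_mul hN hVP hNPt hL.1 hΓ⟩⟩

theorem DWComm.of_intertwining (hP : IsMonicSeq P) (hPt : IsMonicSeq Pt) (h : DWComm P) :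
    DWComm Pt := by
  rw [dwComm_iff_commute_eigenvalues hPt]
  intro L₁ L₂ h₁ h₂ k Γ₁ Γ₂ e₁ e₂
  have hcomm := (dwComm_iff_commute_eigenvalues hP).1 h
  have hNV (k : ℕ) : N (V (P k)) = ((A k : Matrix n n ℂ) * B k).map C * P k := by
    rw [hVP, hN.map_mapC_mul_of_eq (hNPt k)]
  have hD : InDW P fun Q => N (V Q) := ⟨hV.comp hN, fun k => ⟨_, hNV k⟩⟩
  have s₁ := sandwich_apply_eq_mapC_mul hN hVP hNPt h₁.1 e₁
  have s₂ := sandwich_apply_eq_mapC_mul hN hVP hNPt h₂.1 e₂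
  have H₁ := h₁.sandwich hN hVP hNPt hV
  have H₂ := h₂.sandwich hN hVP hNPt hV
  exact Commute.of_units_sandwich (A k) (B k) (hcomm _ _ H₁ hD k _ _ s₁ (hNV k))
    (hcomm _ _ H₂ hD k _ _ s₂ (hNV k)) (hcomm _ _ H₁ H₂ k _ _ s₁ s₂)

end Darboux

theorem stmt9_general {n : Type*} [Fintype n] [DecidableEq n]
    (S : Set ℝ) (W Wt : ℝ → Matrix n n ℂ)
    (P Pt : ℕ → MatP n) (hP : MonicOPS S W P) (hPt : MonicOPS S Wt Pt)
    (hDar : IsDarbouxPair P Pt) :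
    DWComm P ↔ DWComm Pt := by
  obtain ⟨V, N, hV, hN, hD, hVP⟩ := hDar
  choose A hA hVP using hVP
  choose Θ hΘ using hD.2
  have hΘu k : IsUnit (Θ k) := hP.isMonicSeq.isUnit_of_degPres (hV.comp hN) (hΘ k)
  let A' k := (hA k).unit
  let B k := (A' k)⁻¹ * (hΘu k).unit
  have hVP' k : V (P k) = (A' k : Matrix n n ℂ).map C * Pt k := hVP k
  have hNPt k : N (Pt k) = (B k : Matrix n n ℂ).map C * P k := by
    have h := hΘ k
    simp only [hVP' k] at h
    exact hN.1.eq_inv_mapC_mul (A' k) h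
  exact ⟨.of_intertwining hN.1 hVP' hNPt hV.1 hP.isMonicSeq hPt.isMonicSeq,
    .of_intertwining hV.1 hNPt hVP' hN.1 hPt.isMonicSeq hP.isMonicSeq⟩

/-- If `W̃` is a Darboux transformation of `W`, then `D(W)` is commutative
if and only if `D(W̃)` is commutative. -/
theorem stmt9 {n : Type*} [Fintype n] [DecidableEq n]
    (S : Set ℝ) (W Wt : ℝ → Matrix n n ℂ)
    (hW : IsWeight S W) (hWt : IsWeight S Wt)
    (P Pt : ℕ → MatP n) (hP : MonicOPS S W P) (hPt : MonicOPS S Wt Pt)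
    (hDar : IsDarbouxPair P Pt) :
    DWComm P ↔ DWComm Pt :=
  stmt9_general S W Wt P Pt hP hPt hDar
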